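/- Let μ = μ₀ ∗ μ₁ be the convolution of two compactly supported probability measures on ℝ, neither of which is a Dirac measure. If Λ is a bi-zero set of μ₀ (i.e., 0 ∈ Λ and μ̂₀(λ−λ') = 0 for all distinct λ, λ' ∈ Λ), then Λ is a bi-zero set of μ but Λ is not a spectrum of μ. -/

import Mathlib

open MeasureTheory Complex Real
open scoped ENNReal

/-- The Fourier transform `μ̂(ξ) = ∫ e^{-2πiξx} dμ(x)`. -/
noncomputable def FT (μ : Measure ℝ) (ξ : ℝ) : ℂ :=
  ∫ x, Complex.exp (-2 * Real.pi * Complex.I * ξ * x) ∂μ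

/-- `Λ` is a bi-zero set of `ν`: `0 ∈ Λ` and `ν̂` vanishes on `(Λ - Λ) \ {0}`. -/
def IsBiZeroSet (ν : Measure ℝ) (Λ : Set ℝ) : Prop :=
  0 ∈ Λ ∧ ∀ l ∈ Λ, ∀ l' ∈ Λ, l ≠ l' → FT ν (l - l') = 0

/-- Orthonormality of the exponentials `e_λ, λ ∈ Λ`, in `L²(μ)`. -/
def ExpOrthonormal (μ : Measure ℝ) (Λ : Set ℝ) : Prop :=
  ∀ l ∈ Λ, ∀ l' ∈ Λ, FT μ (l - l') = if l = l' then 1 else 0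

/-- Totality of the exponentials `e_λ, λ ∈ Λ`, in `L²(μ)`. -/
def ExpTotal (μ : Measure ℝ) (Λ : Set ℝ) : Prop :=
  ∀ f : Lp ℂ 2 μ,
    (∀ l ∈ Λ, ∫ x, f x *
      (starRingEnd ℂ) (Complex.exp (-2 * Real.pi * Complex.I * l * x)) ∂μ = 0) → f = 0

/-- `Λ` is a spectrum of `μ`: the exponentials `e_λ, λ ∈ Λ`, form an
orthonormal basis (a maximal orthonormal family) of `L²(μ)`. -/
def IsSpectrumOf (μ : Measure ℝ) (Λ : Set ℝ) : Prop :=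
  ExpOrthonormal μ Λ ∧ ExpTotal μ Λ

/-!
If `Λ` were a spectrum of `μ = μ₀ ∗ μ₁`, Parseval for the exponential basis of `L²(μ)` applied to
`e_ξ` gives `∑_λ |μ̂(ξ - λ)|² = 1`, while Bessel for the orthonormal family `e_λ` in `L²(μ₀)` gives
`∑_λ |μ̂₀(ξ - λ)|² ≤ 1`. Since `|μ̂| = |μ̂₀| |μ̂₁| ≤ |μ̂₀|` termwise, the term `λ = 0` forces
`|μ̂₁(ξ)| = 1` wherever `μ̂₀(ξ) ≠ 0`, hence on a neighbourhood of `0`. By strict convexity,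
`|μ̂₁(ξ)| = 1` means that `x ↦ e^{-2πiξx}` is `μ₁`-a.e. constant, and doing this for two
frequencies with irrational ratio shows that `μ₁` is a Dirac mass.
-/

open scoped InnerProductSpace

noncomputable def fourierExp (ξ x : ℝ) : ℂ := Complex.exp (-2 * π * I * ξ * x)

lemma continuous_fourierExp (ξ : ℝ) : Continuous (fourierExp ξ) := by
  unfold fourierExp; fun_prop

lemma norm_fourierExp (ξ x : ℝ) : ‖fourierExp ξ x‖ = 1 := by
  rw [fourierExp, show -2 * π * I * ξ * x = ((-2 * π * ξ * x : ℝ) : ℂ) * I by push_cast; ring,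
    norm_exp_ofReal_mul_I]

lemma fourierExp_add (ξ x y : ℝ) : fourierExp ξ (x + y) = fourierExp ξ x * fourierExp ξ y := by
  simp only [fourierExp, ← Complex.exp_add]
  push_cast; ring_nf

lemma conj_fourierExp_mul (l l' x : ℝ) :
    starRingEnd ℂ (fourierExp l x) * fourierExp l' x = fourierExp (l' - l) x := by
  simp only [fourierExp, ← Complex.exp_conj, ← Complex.exp_add, map_mul, map_neg, map_ofNat,
    conj_I, conj_ofReal]
  push_cast; ring_nf

lemma exists_int_of_fourierExp_eq {ξ x y : ℝ} (h : fourierExp ξ x = fourierExp ξ y) :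
    ∃ n : ℤ, ξ * (x - y) = n := by
  obtain ⟨n, hn⟩ := Complex.exp_eq_exp_iff_exists_int.mp h
  refine ⟨-n, ?_⟩
  have h2pi : 2 * (π : ℂ) * I ≠ 0 := by simp [Real.pi_ne_zero]
  exact_mod_cast mul_left_cancel₀ h2pi (by push_cast; linear_combination -hn :
    2 * (π : ℂ) * I * ((ξ * (x - y) : ℝ) : ℂ) = 2 * π * I * ((-n : ℤ) : ℂ))

lemma memLp_fourierExp (μ : Measure ℝ) [IsFiniteMeasure μ] (p : ℝ≥0∞) (ξ : ℝ) :
    MemLp (fourierExp ξ) p μ :=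
  MemLp.of_bound (continuous_fourierExp ξ).aestronglyMeasurable 1
    (.of_forall fun x => (norm_fourierExp ξ x).le)

lemma FT_eq_integral_fourierExp (μ : Measure ℝ) (ξ : ℝ) : FT μ ξ = ∫ x, fourierExp ξ x ∂μ := rfl

lemma FT_zero (μ : Measure ℝ) [IsProbabilityMeasure μ] : FT μ 0 = 1 := by simp [FT]

lemma norm_FT_le_one (μ : Measure ℝ) [IsProbabilityMeasure μ] (ξ : ℝ) : ‖FT μ ξ‖ ≤ 1 := by
  simpa [FT_eq_integral_fourierExp] using norm_integral_le_of_norm_le_const (μ := μ) (C := 1)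
    (.of_forall fun x => (norm_fourierExp ξ x).le)

lemma continuous_FT (μ : Measure ℝ) [IsFiniteMeasure μ] : Continuous (FT μ) :=
  continuous_of_dominated (bound := fun _ => 1)
    (fun ξ => (continuous_fourierExp ξ).aestronglyMeasurable)
    (fun ξ => .of_forall fun x => (norm_fourierExp ξ x).le) (integrable_const 1)
    (.of_forall fun x => by fun_prop)

lemma FT_conv (μ₀ μ₁ : Measure ℝ) [IsFiniteMeasure μ₀] [IsFiniteMeasure μ₁] (ξ : ℝ) :
    FT (μ₀.conv μ₁) ξ = FT μ₀ ξ * FT μ₁ ξ := by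
  rw [FT_eq_integral_fourierExp, Measure.conv,
    integral_map (by fun_prop) (continuous_fourierExp ξ).aestronglyMeasurable]
  simp only [fourierExp_add]
  exact integral_prod_mul (fourierExp ξ) (fourierExp ξ)

lemma IsBiZeroSet.conv {μ₀ : Measure ℝ} {Λ : Set ℝ} (h : IsBiZeroSet μ₀ Λ) (μ₁ : Measure ℝ)
    [IsFiniteMeasure μ₀] [IsFiniteMeasure μ₁] : IsBiZeroSet (μ₀.conv μ₁) Λ :=
  ⟨h.1, fun l hl l' hl' hne => by rw [FT_conv, h.2 l hl l' hl' hne, zero_mul]⟩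

noncomputable def expLp (μ : Measure ℝ) [IsFiniteMeasure μ] (l : ℝ) : Lp ℂ 2 μ :=
  (memLp_fourierExp μ 2 l).toLp (fourierExp l)

section expLp

variable (μ : Measure ℝ) [IsFiniteMeasure μ]

lemma inner_expLp_left (l : ℝ) (f : Lp ℂ 2 μ) :
    ⟪expLp μ l, f⟫_ℂ = ∫ x, f x * starRingEnd ℂ (fourierExp l x) ∂μ := by
  rw [L2.inner_def]
  refine integral_congr_ae ?_
  filter_upwards [MemLp.coeFn_toLp (memLp_fourierExp μ 2 l)] with x hx
  rw [expLp, hx, RCLike.inner_apply, mul_comm]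

lemma inner_expLp_expLp (l l' : ℝ) : ⟪expLp μ l, expLp μ l'⟫_ℂ = FT μ (l' - l) := by
  rw [inner_expLp_left, FT_eq_integral_fourierExp]
  refine integral_congr_ae ?_
  filter_upwards [MemLp.coeFn_toLp (memLp_fourierExp μ 2 l')] with x hx
  rw [expLp, hx, mul_comm, conj_fourierExp_mul]

end expLp

lemma orthonormal_expLp (μ : Measure ℝ) [IsProbabilityMeasure μ] {Λ : Set ℝ}
    (h : ∀ l ∈ Λ, ∀ l' ∈ Λ, l ≠ l' → FT μ (l - l') = 0) :
    Orthonormal ℂ fun l : Λ => expLp μ l := by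
  classical
  refine orthonormal_iff_ite.mpr fun l l' => ?_
  rw [inner_expLp_expLp]
  split_ifs with hll'
  · rw [hll', sub_self, FT_zero]
  · exact h _ l'.2 _ l.2 fun e => hll' (Subtype.ext e.symm)

lemma IsBiZeroSet.orthonormal_expLp {μ : Measure ℝ} [IsProbabilityMeasure μ] {Λ : Set ℝ}
    (h : IsBiZeroSet μ Λ) : Orthonormal ℂ fun l : Λ => expLp μ l :=
  _root_.orthonormal_expLp μ h.2

lemma IsBiZeroSet.summable_norm_FT_sq {μ : Measure ℝ} [IsProbabilityMeasure μ] {Λ : Set ℝ}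
    (h : IsBiZeroSet μ Λ) (ξ : ℝ) : Summable fun l : Λ => ‖FT μ (ξ - l)‖ ^ 2 := by
  simpa only [inner_expLp_expLp] using h.orthonormal_expLp.inner_products_summable (expLp μ ξ)

lemma IsBiZeroSet.tsum_norm_FT_sq_le_one {μ : Measure ℝ} [IsProbabilityMeasure μ] {Λ : Set ℝ}
    (h : IsBiZeroSet μ Λ) (ξ : ℝ) : ∑' l : Λ, ‖FT μ (ξ - l)‖ ^ 2 ≤ 1 := by
  have hnorm : ‖expLp μ ξ‖ ^ 2 = 1 := by
    rw [@norm_eq_sqrt_re_inner ℂ, inner_expLp_expLp, sub_self, FT_zero]; simp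
  simpa only [inner_expLp_expLp, hnorm] using
    h.orthonormal_expLp.tsum_inner_products_le (expLp μ ξ)

lemma IsSpectrumOf.hasSum_norm_FT_sq {μ : Measure ℝ} [IsProbabilityMeasure μ] {Λ : Set ℝ}
    (h : IsSpectrumOf μ Λ) (ξ : ℝ) : HasSum (fun l : Λ => ‖FT μ (ξ - l)‖ ^ 2) 1 := by
  have hon : Orthonormal ℂ fun l : Λ => expLp μ l :=
    orthonormal_expLp μ fun l hl l' hl' hne => by rw [h.1 l hl l' hl', if_neg hne]
  have htotal : (Submodule.span ℂ (Set.range fun l : Λ => expLp μ l))ᗮ = ⊥ := by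
    refine (Submodule.eq_bot_iff _).mpr fun f hf => h.2 f fun l hl => ?_
    exact (inner_expLp_left μ l f).symm.trans <|
      (Submodule.mem_orthogonal _ f).mp hf _ (Submodule.subset_span ⟨⟨l, hl⟩, rfl⟩)
  let b := HilbertBasis.mkOfOrthogonalEqBot hon htotal
  have hterm : ∀ l : Λ, ⟪expLp μ ξ, b l⟫_ℂ * ⟪b l, expLp μ ξ⟫_ℂ = ((‖FT μ (ξ - l)‖ ^ 2 : ℝ) : ℂ) :=
    fun l => by
      rw [← inner_conj_symm, HilbertBasis.coe_mkOfOrthogonalEqBot, inner_expLp_expLp,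
        Complex.conj_mul']
      push_cast; rfl
  have hparseval := b.hasSum_inner_mul_inner (expLp μ ξ) (expLp μ ξ)
  rw [inner_expLp_expLp, sub_self, FT_zero] at hparseval
  simp only [hterm] at hparseval
  exact Complex.hasSum_ofReal.mp hparseval

lemma norm_FT_eq_one_of_isSpectrumOf_conv {μ₀ μ₁ : Measure ℝ} [IsProbabilityMeasure μ₀]
    [IsProbabilityMeasure μ₁] {Λ : Set ℝ} (hbz : IsBiZeroSet μ₀ Λ)
    (hsp : IsSpectrumOf (μ₀.conv μ₁) Λ) {ξ : ℝ} (hξ : FT μ₀ ξ ≠ 0) : ‖FT μ₁ ξ‖ = 1 := by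
  refine (norm_FT_le_one μ₁ ξ).eq_of_not_lt fun hlt => ?_
  have hle : ∀ l : Λ, ‖FT (μ₀.conv μ₁) (ξ - l)‖ ^ 2 ≤ ‖FT μ₀ (ξ - l)‖ ^ 2 := fun l => by
    rw [FT_conv, norm_mul]
    gcongr
    exact mul_le_of_le_one_right (norm_nonneg _) (norm_FT_le_one μ₁ _)
  have hlt₀ : ‖FT (μ₀.conv μ₁) (ξ - (⟨0, hbz.1⟩ : Λ))‖ ^ 2 < ‖FT μ₀ (ξ - (⟨0, hbz.1⟩ : Λ))‖ ^ 2 := by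
    simp only [sub_zero, FT_conv, norm_mul]
    gcongr
    exact mul_lt_of_lt_one_right (norm_pos_iff.mpr hξ) hlt
  have := hasSum_lt hle hlt₀ (hsp.hasSum_norm_FT_sq ξ) (hbz.summable_norm_FT_sq ξ).hasSum
  linarith [hbz.tsum_norm_FT_sq_le_one ξ]

lemma ae_fourierExp_eq_FT {μ : Measure ℝ} [IsProbabilityMeasure μ] {ξ : ℝ}
    (h : ‖FT μ ξ‖ = 1) : ∀ᵐ x ∂μ, fourierExp ξ x = FT μ ξ := by
  rcases ae_eq_const_or_norm_integral_lt_of_norm_le_const (μ := μ) (f := fourierExp ξ) (C := 1)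
    (.of_forall fun x => (norm_fourierExp ξ x).le) with hconst | hlt
  · filter_upwards [hconst] with x hx
    simpa [average_eq_integral, ← FT_eq_integral_fourierExp] using hx
  · simp only [probReal_univ, one_mul, ← FT_eq_integral_fourierExp, h, lt_self_iff_false] at hlt

lemma exists_eq_dirac_of_norm_FT_eq_one {μ : Measure ℝ} [IsProbabilityMeasure μ] {ε : ℝ}
    (hε : 0 < ε) (h : ∀ ξ, |ξ| < ε → ‖FT μ ξ‖ = 1) : ∃ a, μ = Measure.dirac a := by
  -- two frequencies with irrational ratio `√2`: a common period of both exponentials is `0`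
  set δ := ε / 2 with hδ
  have hsqrt : √2 < 2 := by
    rw [Real.sqrt_lt' two_pos]; norm_num
  have h₁ := ae_fourierExp_eq_FT (h δ (by rw [abs_of_pos (by positivity)]; linarith))
  have h₂ := ae_fourierExp_eq_FT (h (√2 * δ) (by rw [abs_of_pos (by positivity)]; nlinarith))
  obtain ⟨a, ha₁, ha₂⟩ := (h₁.and h₂).exists
  suffices hae : ∀ᵐ x ∂μ, x = a from
    ⟨a, by simpa using (ProbabilityTheory.hasLaw_dirac_of_ae_eq (X := id) hae).map_eq⟩
  filter_upwards [h₁, h₂] with x hx₁ hx₂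
  obtain ⟨m, hm⟩ := exists_int_of_fourierExp_eq (hx₁.trans ha₁.symm)
  obtain ⟨n, hn⟩ := exists_int_of_fourierExp_eq (hx₂.trans ha₂.symm)
  by_contra hxa
  have hd : δ * (x - a) ≠ 0 := mul_ne_zero (by positivity) (sub_ne_zero.mpr hxa)
  refine irrational_sqrt_two ⟨n / m, ?_⟩
  push_cast
  rw [← hm, ← hn, mul_assoc, mul_div_assoc, div_self hd, mul_one]

theorem stmt_5_general (μ₀ μ₁ : Measure ℝ) [IsProbabilityMeasure μ₀] [IsProbabilityMeasure μ₁]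
    (hd₁ : ¬ ∃ a : ℝ, μ₁ = Measure.dirac a)
    (Λ : Set ℝ) (hbz : IsBiZeroSet μ₀ Λ) :
    IsBiZeroSet (μ₀.conv μ₁) Λ ∧ ¬ IsSpectrumOf (μ₀.conv μ₁) Λ := by
  refine ⟨hbz.conv μ₁, fun hsp => hd₁ ?_⟩
  obtain ⟨ε, hε, hball⟩ := Metric.eventually_nhds_iff.mp <|
    (continuous_FT μ₀).continuousAt.eventually_ne (by rw [FT_zero]; exact one_ne_zero)
  exact exists_eq_dirac_of_norm_FT_eq_one hε fun ξ hξ =>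
    norm_FT_eq_one_of_isSpectrumOf_conv hbz hsp (hball (by simpa [Real.dist_eq] using hξ))

theorem stmt_5 (μ₀ μ₁ : Measure ℝ) [IsProbabilityMeasure μ₀] [IsProbabilityMeasure μ₁]
    (hcpt₀ : ∃ K : Set ℝ, IsCompact K ∧ μ₀ Kᶜ = 0)
    (hcpt₁ : ∃ K : Set ℝ, IsCompact K ∧ μ₁ Kᶜ = 0)
    (hd₀ : ¬ ∃ a : ℝ, μ₀ = Measure.dirac a)
    (hd₁ : ¬ ∃ a : ℝ, μ₁ = Measure.dirac a)
    (Λ : Set ℝ) (hΛ : Λ.Countable) (hbz : IsBiZeroSet μ₀ Λ) :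
    IsBiZeroSet (μ₀.conv μ₁) Λ ∧ ¬ IsSpectrumOf (μ₀.conv μ₁) Λ :=
  stmt_5_general μ₀ μ₁ hd₁ Λ hbz
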